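/- The difference sequence of the Thue–Morse sequence is square-free: there is no nonempty word u and position i such that the factor of w starting at i equals u·u, where w_i = v_{i+1} − v_i and v is the Thue–Morse sequence. -/

import Mathlib

/-- The Thue–Morse sequence: parity of the number of 1s in binary. -/
def thueMorse (n : ℕ) : ℕ := (Nat.digits 2 n).count 1 % 2

/-- The difference sequence of the Thue–Morse sequence. -/
def tmDiff (i : ℕ) : ℤ := (thueMorse (i + 1) : ℤ) - thueMorse i

/-!
A square `u u` with `|u| = k` in the difference sequence at `i` makes `v (i + j) - v (i + k + j)`
constant for `j ≤ k`; since `v` is `0/1`-valued this constant is `0`, so `v` has an overlap of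
period `k`. The Thue–Morse sequence has none. As `v (2n) ≠ v (2n + 1)`, an overlap of odd period
`k` alternates along its first `k + 1` letters, so `v m ≠ v (m + k)`. An overlap of even period
`2l`, read on the positions of one parity, gives one of period `l`, because
`v (2n + r) = v n xor r`.
-/

lemma thueMorse_le_one (n : ℕ) : thueMorse n ≤ 1 :=
  Nat.lt_succ_iff.mp (Nat.mod_lt _ two_pos)

lemma thueMorse_two_mul (n : ℕ) : thueMorse (2 * n) = thueMorse n := by
  rcases Nat.eq_zero_or_pos n with rfl | hn
  · rfl
  · rw [thueMorse, Nat.digits_def' one_lt_two (by omega), Nat.mul_mod_right,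
      Nat.mul_div_cancel_left n two_pos]
    rfl

lemma thueMorse_two_mul_add_one (n : ℕ) : thueMorse (2 * n + 1) = 1 - thueMorse n := by
  have hdiv : (2 * n + 1) / 2 = n := by omega
  rw [thueMorse, Nat.digits_def' one_lt_two (by omega), Nat.mul_add_mod_self_left, hdiv,
    List.count_cons_self, thueMorse]
  omega

lemma thueMorse_two_mul_ne_two_mul_add_one (n : ℕ) :
    thueMorse (2 * n) ≠ thueMorse (2 * n + 1) := by
  have := thueMorse_le_one n
  rw [thueMorse_two_mul, thueMorse_two_mul_add_one]
  omega

lemma thueMorse_two_mul_add_eq_iff {r : ℕ} (hr : r < 2) (a b : ℕ) :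
    thueMorse (2 * a + r) = thueMorse (2 * b + r) ↔ thueMorse a = thueMorse b := by
  interval_cases r
  · simp only [add_zero, thueMorse_two_mul]
  · have := thueMorse_le_one a
    have := thueMorse_le_one b
    rw [thueMorse_two_mul_add_one, thueMorse_two_mul_add_one]
    omega

lemma add_mod_two_eq_of_forall_ne_succ {f : ℕ → ℕ} (hf : ∀ n, f n ≤ 1) {m k : ℕ}
    (h : ∀ j < k, f (m + j) ≠ f (m + j + 1)) : (f (m + k) + k) % 2 = f m % 2 := by
  induction k with
  | zero => rfl
  | succ k ih =>
    have := hf (m + k)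
    have := hf (m + k + 1)
    have := h k k.lt_succ_self
    have := ih fun j hj => h j (by omega)
    rw [← add_assoc m]
    omega

/-- `f m ⋯ f (m + 2k)` is an overlap `a x a x a` with `|a x| = k`. -/
def HasOverlap {α : Type*} (f : ℕ → α) (m k : ℕ) : Prop :=
  ∀ j ≤ k, f (m + j) = f (m + j + k)

lemma HasOverlap.thueMorse_half {m l : ℕ} (h : HasOverlap thueMorse m (2 * l)) :
    HasOverlap thueMorse (m / 2) l := by
  intro j hj
  have hm := Nat.div_add_mod m 2
  rw [← thueMorse_two_mul_add_eq_iff (Nat.mod_lt m two_pos)]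
  convert h (2 * j) (by omega) using 2 <;> omega

lemma not_hasOverlap_thueMorse_of_odd {m k : ℕ} (hk : Odd k) :
    ¬ HasOverlap thueMorse m k := by
  intro h
  obtain ⟨h', rfl⟩ := hk
  have alternating : ∀ j < 2 * h' + 1, thueMorse (m + j) ≠ thueMorse (m + j + 1) := by
    intro j hj
    rcases Nat.even_or_odd' (m + j) with ⟨n, hn | hn⟩
    · rw [hn]
      exact thueMorse_two_mul_ne_two_mul_add_one n
    · have hnext := h (j + 1) hj
      rw [← add_assoc] at hnext
      rw [h j hj.le, hnext]
      convert thueMorse_two_mul_ne_two_mul_add_one (n + h' + 1) using 2 <;> omega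
  have hparity := add_mod_two_eq_of_forall_ne_succ thueMorse_le_one alternating
  have hends := h 0 (Nat.zero_le _)
  simp only [add_zero] at hends
  omega

theorem thueMorse_not_hasOverlap {m k : ℕ} (hk : 0 < k) : ¬ HasOverlap thueMorse m k := by
  induction k using Nat.strong_induction_on generalizing m with
  | _ k ih =>
    rcases Nat.even_or_odd' k with ⟨l, rfl | rfl⟩
    · exact fun h => ih l (by omega) (by omega) h.thueMorse_half
    · exact not_hasOverlap_thueMorse_of_odd (odd_two_mul_add_one l)

lemma thueMorse_sub_shift_eq_of_tmDiff_eq {i k : ℕ}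
    (h : ∀ j < k, tmDiff (i + j) = tmDiff (i + k + j)) :
    ∀ j ≤ k, (thueMorse (i + j) : ℤ) - thueMorse (i + k + j) =
      thueMorse i - thueMorse (i + k) := by
  intro j hj
  induction j with
  | zero => rfl
  | succ j ih =>
    have := h j (by omega)
    have := ih (by omega)
    simp only [tmDiff, ← add_assoc] at *
    omega

lemma hasOverlap_thueMorse_of_tmDiff_eq {i k : ℕ}
    (h : ∀ j < k, tmDiff (i + j) = tmDiff (i + k + j)) : HasOverlap thueMorse i k := by
  have hsub := thueMorse_sub_shift_eq_of_tmDiff_eq h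
  have hzero : (thueMorse i : ℤ) = thueMorse (i + k) := by
    have := hsub k le_rfl
    have := thueMorse_le_one i
    have := thueMorse_le_one (i + k)
    have := thueMorse_le_one (i + k + k)
    omega
  intro j hj
  have := hsub j hj
  rw [add_right_comm]
  omega

/-- The difference sequence of Thue–Morse is square-free. -/
theorem tmDiff_squarefree :
    ¬ ∃ i k : ℕ, 0 < k ∧ ∀ j < k, tmDiff (i + j) = tmDiff (i + k + j) := by
  rintro ⟨i, k, hk, h⟩
  exact thueMorse_not_hasOverlap hk (hasOverlap_thueMorse_of_tmDiff_eq h)
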